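/- arXiv:2603.27640 — 3 statements merged into one kernel-verified Lean document; each statement's English description precedes it below -/
import Mathlib

section
/- Let α > 1 and M ∈ ℕ₊, and let D_M ∈ (0,1] be the unique solution of ∑_{i=M}^∞ ((α−1)/α^i)^D = 1. Then lim_{M→∞} D_M = 0. -/
open Real Filter Set

/-! For fixed `d > 0` the series is geometric with ratio `α ^ (-d) < 1`, so its value
`(α - 1) ^ d α ^ (-M d) / (1 - α ^ (-d))` tends to `0` as `M → ∞`; in particular it is `< 1`
for large `M`. Since every term `(α - 1) / α ^ i` with `i ≥ 1` lies in `(0, 1]`, the sum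
decreases in the exponent: for large `M`, `D_M ≥ d` would give `1 = ∑ (…)^{D_M} ≤ ∑ (…)^d < 1`. -/

noncomputable def tailSum (α : ℝ) (M : ℕ) (d : ℝ) : ℝ :=
  ∑' j : ℕ, ((α - 1) / α ^ (M + j)) ^ d

lemma rpow_div_pow_eq {α c : ℝ} (hα : 0 < α) (hc : 0 ≤ c) (n : ℕ) (d : ℝ) :
    (c / α ^ n) ^ d = c ^ d * ((α ^ d)⁻¹) ^ n := by
  rw [div_rpow hc (by positivity), ← rpow_natCast, ← rpow_mul hα.le, mul_comm,
    rpow_mul hα.le, rpow_natCast, div_eq_mul_inv, inv_pow]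

lemma hasSum_tailSum {α d : ℝ} (hα : 1 < α) (hd : 0 < d) (M : ℕ) :
    HasSum (fun j : ℕ => ((α - 1) / α ^ (M + j)) ^ d)
      ((α - 1) ^ d * ((α ^ d)⁻¹) ^ M / (1 - (α ^ d)⁻¹)) := by
  have hr : 1 < α ^ d := one_lt_rpow hα hd
  have hgeom := (hasSum_geometric_of_lt_one (by positivity) (inv_lt_one_of_one_lt₀ hr)).mul_left
    ((α - 1) ^ d * ((α ^ d)⁻¹) ^ M)
  have hterm (j : ℕ) : ((α - 1) / α ^ (M + j)) ^ d
      = (α - 1) ^ d * ((α ^ d)⁻¹) ^ M * ((α ^ d)⁻¹) ^ j := by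
    rw [rpow_div_pow_eq (by linarith) (by linarith), pow_add, mul_assoc]
  rw [funext hterm, div_eq_mul_inv]
  exact hgeom

lemma tendsto_tailSum_atTop {α d : ℝ} (hα : 1 < α) (hd : 0 < d) :
    Tendsto (fun M => tailSum α M d) atTop (nhds 0) := by
  have hr : 1 < α ^ d := one_lt_rpow hα hd
  have hlim := ((tendsto_pow_atTop_nhds_zero_of_lt_one (by positivity)
    (inv_lt_one_of_one_lt₀ hr)).const_mul ((α - 1) ^ d)).div_const (1 - (α ^ d)⁻¹)
  rw [mul_zero, zero_div] at hlim
  exact hlim.congr fun M => ((hasSum_tailSum hα hd M).tsum_eq).symm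

lemma tailSum_le_tailSum_of_le {α ε d : ℝ} {M : ℕ} (hα : 1 < α) (hM : 1 ≤ M) (hε : 0 < ε)
    (hεd : ε ≤ d) : tailSum α M d ≤ tailSum α M ε := by
  have hterm_pos (j : ℕ) : 0 < (α - 1) / α ^ (M + j) := by
    have : 0 < α - 1 := by linarith
    positivity
  have hterm_le_one (j : ℕ) : (α - 1) / α ^ (M + j) ≤ 1 := by
    rw [div_le_one (by positivity)]
    calc α - 1 ≤ α := by linarith
      _ ≤ α ^ (M + j) := le_self_pow₀ hα.le (by omega)
  have hle (j : ℕ) : ((α - 1) / α ^ (M + j)) ^ d ≤ ((α - 1) / α ^ (M + j)) ^ ε :=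
    rpow_le_rpow_of_exponent_ge (hterm_pos j) (hterm_le_one j) hεd
  have hsum := (hasSum_tailSum hα hε M).summable
  exact (hsum.of_nonneg_of_le (fun j => (rpow_pos_of_pos (hterm_pos j) d).le) hle).tsum_le_tsum
    hle hsum

/-- Let α > 1, and for each M ∈ ℕ₊ let D_M ∈ (0,1] be the (unique)
solution of ∑_{i=M}^∞ ((α−1)/α^i)^D = 1. Then D_M → 0 as M → ∞.
Here the sum over i ≥ M is written as a sum over j : ℕ with i = M + j. -/
theorem stmt_8 (α : ℝ) (hα : 1 < α) (D : ℕ → ℝ)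
    (hD : ∀ M : ℕ, 1 ≤ M → D M ∈ Set.Ioc (0 : ℝ) 1 ∧
      (∑' j : ℕ, ((α - 1) / α ^ (M + j)) ^ (D M)) = 1) :
    Tendsto D atTop (nhds 0) := by
  rw [tendsto_order]
  refine ⟨fun a ha => ?_, fun ε hε => ?_⟩
  · filter_upwards [eventually_ge_atTop 1] with M hM
    exact ha.trans (hD M hM).1.1
  · filter_upwards [eventually_ge_atTop 1,
      (tendsto_tailSum_atTop hα hε).eventually_lt_const one_pos] with M hM hsmall
    by_contra! hεD
    have hone : tailSum α M (D M) = 1 := (hD M hM).2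
    linarith [tailSum_le_tailSum_of_le hα hM hε hεD]
end

section
/- Fix α > 1 and let P(t,q) = log( e^{−t·log(α/(α−1)) + q} / (1 − e^{−t·log α + q}) ). For every β > 1, the pair t(β) = ((1−β)·log(β−1) + β·log β) / (−log(α−1) + β·log α) and q(β) = t(β)·log α + log((β−1)/β) solves the system P(t, q) = qβ and ∂P/∂q(t, q) = β. -/
/-! The choice of `q(β)` makes `e^{−t log α + q} = (β − 1)/β` whatever `t` is, so
`∂P/∂q = 1/(1 − e^{−t log α + q}) = β` automatically, while `P(t, q) = qβ` becomes a linear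
equation in `t` whose solution is `t(β)`. -/

open Real Filter Topology

namespace Real

lemma log_exp_add_div_one_sub_exp_add {a b q : ℝ} (h : exp (b + q) < 1) :
    log (exp (a + q) / (1 - exp (b + q))) = a + q - log (1 - exp (b + q)) := by
  rw [log_div (exp_ne_zero _) (by linarith), log_exp]

lemma hasDerivAt_log_exp_add_div_one_sub_exp_add (a b : ℝ) {q : ℝ} (h : exp (b + q) < 1) :
    HasDerivAt (fun q' => log (exp (a + q') / (1 - exp (b + q'))))
      (1 / (1 - exp (b + q))) q := by
  have hne : 1 - exp (b + q) ≠ 0 := by linarith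
  have hexp : HasDerivAt (fun q' => exp (b + q')) (exp (b + q)) q := by
    simpa using ((hasDerivAt_id q).const_add b).exp
  have hsplit : HasDerivAt (fun q' => a + q' - log (1 - exp (b + q')))
      (1 - -exp (b + q) / (1 - exp (b + q))) q :=
    ((hasDerivAt_id q).const_add a).sub ((hexp.const_sub 1).log hne)
  have hdomain : ∀ᶠ q' in 𝓝 q, exp (b + q') < 1 :=
    (by fun_prop : ContinuousAt (fun q' => exp (b + q')) q).eventually (Iio_mem_nhds h)
  have hval : 1 - -exp (b + q) / (1 - exp (b + q)) = 1 / (1 - exp (b + q)) := by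
    field_simp
    ring
  rw [← hval]
  exact hsplit.congr_of_eventuallyEq
    (hdomain.mono fun q' hq' => log_exp_add_div_one_sub_exp_add hq')

end Real

lemma neg_log_sub_one_add_mul_log_pos {α β : ℝ} (hα : 1 < α) (hβ : 1 ≤ β) :
    0 < -log (α - 1) + β * log α := by
  have hlog : log (α - 1) < log α := log_lt_log (by linarith) (by linarith)
  nlinarith [log_pos hα]

/-- With P(t,q) = log( e^{−t log(α/(α−1)) + q} / (1 − e^{−t log α + q}) ),
for every β > 1 the pair t(β), q(β) given below lies in the domain e^{−t log α + q} < 1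
and solves P(t,q) = qβ and ∂P/∂q(t,q) = β. -/
theorem stmt_12 (α : ℝ) (hα : 1 < α) (β : ℝ) (hβ : 1 < β) :
    let P : ℝ → ℝ → ℝ := fun t q =>
      Real.log (Real.exp (-t * Real.log (α / (α - 1)) + q) /
        (1 - Real.exp (-t * Real.log α + q)))
    let t : ℝ := ((1 - β) * Real.log (β - 1) + β * Real.log β) /
      (-Real.log (α - 1) + β * Real.log α)
    let q : ℝ := t * Real.log α + Real.log ((β - 1) / β)
    Real.exp (-t * Real.log α + q) < 1 ∧
    P t q = q * β ∧
    HasDerivAt (fun q' => P t q') β q := by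
  intro P t q
  have hβ0 : 0 < β - 1 := by linarith
  have hE : exp (-t * log α + q) = (β - 1) / β := by
    rw [show -t * log α + q = log ((β - 1) / β) by ring, exp_log (by positivity)]
  have hE1 : exp (-t * log α + q) < 1 := by
    rw [hE, div_lt_one (by linarith)]
    linarith
  have hone : 1 - exp (-t * log α + q) = 1 / β := by
    rw [hE]
    field_simp
    ring
  have ht : t * (-log (α - 1) + β * log α) = (1 - β) * log (β - 1) + β * log β :=
    div_mul_cancel₀ _ (neg_log_sub_one_add_mul_log_pos hα hβ.le).ne'
  have hq : q = t * log α + (log (β - 1) - log β) := by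
    rw [← log_div hβ0.ne' (by linarith)]
  refine ⟨hE1, ?_, ?_⟩
  · show log (exp (-t * log (α / (α - 1)) + q) / (1 - exp (-t * log α + q))) = q * β
    rw [log_exp_add_div_one_sub_exp_add hE1, hone, one_div, log_inv,
      log_div (by linarith) (by linarith : α - 1 ≠ 0), hq]
    linear_combination -ht
  · have hderiv := hasDerivAt_log_exp_add_div_one_sub_exp_add (-t * log (α / (α - 1))) _ hE1
    rwa [hone, one_div_one_div] at hderiv
end

section
/- Let α > 1 and define κ : (1, ∞) → ℝ by κ(x) = ((1−x)·log(x−1) + x·log x) / (−log(α−1) + x·log α). Then κ is differentiable, positive on (1,∞), attains its maximum value 1 at x = α/(α−1), and satisfies lim_{x→1⁺} κ(x) = 0 and lim_{x→∞} κ(x) = 0. -/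
/-!
Write `N x = x log x - (x - 1) log (x - 1)` and `D x = x log α - log (α - 1)` for the numerator
and denominator of `κ`. Dividing by `x`, these are the entropy of the distribution
`(1/x, 1 - 1/x)` and its cross entropy against `(1 - 1/α, 1/α)`, so Gibbs' inequality gives
`N ≤ D`, with equality when the two distributions agree, i.e. at `x = α / (α - 1)`.
Concretely, both Gibbs' inequality and the bound `N x ≤ 1 + log x` that forces `κ x → 0` at
infinity reduce to `p log (q / p) ≤ q - p`, i.e. to `log t ≤ t - 1`.
-/

open Real Filter Set Topology

lemma mul_log_div_le_sub {p q : ℝ} (hp : 0 < p) (hq : 0 < q) : p * log (q / p) ≤ q - p := by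
  have h := mul_le_mul_of_nonneg_left (log_le_sub_one_of_pos (div_pos hq hp)) hp.le
  rwa [mul_sub, mul_div_cancel₀ _ hp.ne', mul_one] at h

noncomputable def khintchineNum (x : ℝ) : ℝ := (1 - x) * log (x - 1) + x * log x

noncomputable def khintchineDen (α x : ℝ) : ℝ := -log (α - 1) + x * log α

section Numerator

variable {x : ℝ}

lemma khintchineNum_eq (hx : 1 < x) :
    khintchineNum x = (x - 1) * log (x / (x - 1)) + log x := by
  rw [khintchineNum, log_div (by positivity) (by linarith)]
  ring

lemma khintchineNum_pos (hx : 1 < x) : 0 < khintchineNum x := by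
  have hlog : log (x - 1) ≤ log x := log_le_log (by linarith) (by linarith)
  have : 0 < (x - 1) * (log x - log (x - 1)) + log x := by
    nlinarith [log_pos hx]
  rw [khintchineNum]
  linarith

lemma khintchineNum_le_one_add_log (hx : 1 < x) : khintchineNum x ≤ 1 + log x := by
  have h := mul_log_div_le_sub (sub_pos.mpr hx) (by linarith : 0 < x)
  rw [khintchineNum_eq hx]
  linarith

lemma differentiableAt_khintchineNum (hx : 1 < x) : DifferentiableAt ℝ khintchineNum x := by
  unfold khintchineNum
  fun_prop (disch := linarith)

lemma tendsto_khintchineNum_nhdsGT_one : Tendsto khintchineNum (𝓝[>] 1) (𝓝 0) := by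
  have hcont : Continuous fun x : ℝ => x * log x - (x - 1) * log (x - 1) :=
    continuous_mul_log.sub (continuous_mul_log.comp (continuous_sub_right 1))
  have h := (hcont.tendsto 1).mono_left (nhdsWithin_le_nhds (s := Ioi 1))
  simp only [sub_self, zero_mul, one_mul, log_one] at h
  exact h.congr fun x => by rw [khintchineNum]; ring

end Numerator

section Denominator

variable {α x : ℝ}

lemma khintchineDen_pos (hα : 1 < α) (hx : 1 ≤ x) : 0 < khintchineDen α x := by
  have hlog : log (α - 1) < log α := log_lt_log (by linarith) (by linarith)
  have : log α ≤ x * log α := le_mul_of_one_le_left (log_pos hα).le hx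
  rw [khintchineDen]
  linarith

/-- Gibbs' inequality, split as `(x - 1) log (x/α / (x - 1)) + log (x (α - 1)/α) ≤ 0`. -/
lemma khintchineNum_le_khintchineDen (hα : 1 < α) (hx : 1 < x) :
    khintchineNum x ≤ khintchineDen α x := by
  have hα₀ : 0 < α := by linarith
  have hα₁ : 0 < α - 1 := by linarith
  have h₁ := mul_log_div_le_sub (sub_pos.mpr hx) (by positivity : 0 < x / α)
  have h₂ := mul_log_div_le_sub one_pos (by positivity : 0 < x * (α - 1) / α)
  rw [div_div, log_div (by positivity) (by positivity), log_mul hα₀.ne' (by linarith)] at h₁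
  rw [div_one, one_mul, log_div (by positivity) hα₀.ne', log_mul (by positivity) hα₁.ne'] at h₂
  have hsum : x / α - (x - 1) + (x * (α - 1) / α - 1) = 0 := by
    field_simp
    ring
  rw [khintchineNum, khintchineDen]
  linarith

lemma khintchineNum_eq_khintchineDen (hα : 1 < α) :
    khintchineNum (α / (α - 1)) = khintchineDen α (α / (α - 1)) := by
  have hα₁ : 0 < α - 1 := by linarith
  have hsub : α / (α - 1) - 1 = (α - 1)⁻¹ := by
    field_simp
    ring
  rw [khintchineNum, khintchineDen, hsub, log_inv, log_div (by positivity) hα₁.ne']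
  ring

lemma tendsto_one_add_log_div_khintchineDen_atTop (hα : 1 < α) :
    Tendsto (fun x => (1 + log x) / khintchineDen α x) atTop (𝓝 0) := by
  have hla : 0 < log α := log_pos hα
  have hDen : Tendsto (khintchineDen α) atTop atTop :=
    tendsto_atTop_add_const_left _ _ (tendsto_id.atTop_mul_const hla)
  have hlog : Tendsto (fun x => log x / khintchineDen α x) atTop (𝓝 0) := by
    simpa [khintchineDen, add_comm, mul_comm] using
      tendsto_pow_log_div_mul_add_atTop (log α) (-log (α - 1)) 1 hla.ne'
  simpa [add_div] using hDen.inv_tendsto_atTop.add hlog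

end Denominator

/-- For α > 1, the Khintchine spectrum
κ(x) = ((1−x)log(x−1) + x log x)/(−log(α−1) + x log α) is differentiable and positive
on (1,∞), attains its maximum value 1 at x = α/(α−1), and tends to 0 as x → 1⁺ and
as x → ∞. -/
theorem stmt_13 (α : ℝ) (hα : 1 < α) :
    let κ : ℝ → ℝ := fun x =>
      ((1 - x) * Real.log (x - 1) + x * Real.log x) /
        (-Real.log (α - 1) + x * Real.log α)
    DifferentiableOn ℝ κ (Set.Ioi 1) ∧
    (∀ x ∈ Set.Ioi (1 : ℝ), 0 < κ x) ∧
    κ (α / (α - 1)) = 1 ∧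
    (∀ x ∈ Set.Ioi (1 : ℝ), κ x ≤ 1) ∧
    Tendsto κ (nhdsWithin 1 (Set.Ioi 1)) (nhds 0) ∧
    Tendsto κ atTop (nhds 0) := by
  change let κ : ℝ → ℝ := fun x => khintchineNum x / khintchineDen α x; _
  intro κ
  have hx₀ : 1 < α / (α - 1) := (one_lt_div (by linarith)).mpr (by linarith)
  have hκ_pos : ∀ x ∈ Ioi (1 : ℝ), 0 < κ x := fun x hx =>
    div_pos (khintchineNum_pos hx) (khintchineDen_pos hα (le_of_lt hx))
  refine ⟨fun x hx => ?_, hκ_pos, ?_, fun x hx => ?_, ?_, ?_⟩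
  · have hDen : DifferentiableAt ℝ (khintchineDen α) x := by
      unfold khintchineDen
      fun_prop
    exact ((differentiableAt_khintchineNum hx).div hDen
      (khintchineDen_pos hα (le_of_lt hx)).ne').differentiableWithinAt
  · exact (div_eq_one_iff_eq (khintchineDen_pos hα hx₀.le).ne').mpr
      (khintchineNum_eq_khintchineDen hα)
  · exact div_le_one_of_le₀ (khintchineNum_le_khintchineDen hα hx)
      (khintchineDen_pos hα (le_of_lt hx)).le
  · have hDen : Tendsto (khintchineDen α) (𝓝[>] 1) (𝓝 (khintchineDen α 1)) := by
      unfold khintchineDen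
      exact (Continuous.tendsto (by fun_prop) 1).mono_left nhdsWithin_le_nhds
    have h := tendsto_khintchineNum_nhdsGT_one.div hDen (khintchineDen_pos hα le_rfl).ne'
    rwa [zero_div] at h
  · refine tendsto_of_tendsto_of_tendsto_of_le_of_le' tendsto_const_nhds
      (tendsto_one_add_log_div_khintchineDen_atTop hα) ?_ ?_
    · filter_upwards [eventually_gt_atTop 1] with x hx
      exact (hκ_pos x hx).le
    · filter_upwards [eventually_gt_atTop 1] with x hx
      exact div_le_div_of_nonneg_right (khintchineNum_le_one_add_log hx)
        (khintchineDen_pos hα hx.le).le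
end
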